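/- arXiv:2405.19717 — 4 statements merged into one kernel-verified Lean document; each statement's English description precedes it below -/
import Mathlib

section
/- crx_2(K_n) = 3 for every n ≥ 3; that is, there exists a 3-edge-colouring of the complete graph K_n such that any two vertices lie in a rainbow triangle, and no fewer than 3 colours suffice. -/
open SimpleGraph

/-- `G.CycleThrough S`: there is a cycle in `G` containing all vertices of `S`. -/
def SimpleGraph.CycleThrough {V : Type*} (G : SimpleGraph V) (S : Set V) : Prop :=
  ∃ (u : V) (c : G.Walk u u), c.IsCycle ∧ ∀ v ∈ S, v ∈ c.support

/-- A `k`-rainbow cycle colouring: every `k`-set of vertices lies in a cycle whose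
edges receive pairwise distinct colours. -/
def SimpleGraph.IsRainbowCycleColoring {V : Type*} (G : SimpleGraph V) (k : ℕ)
    (φ : Sym2 V → ℕ) : Prop :=
  ∀ S : Finset V, S.card = k →
    ∃ (u : V) (c : G.Walk u u), c.IsCycle ∧ (∀ v ∈ S, v ∈ c.support) ∧
      (c.edges.map φ).Nodup

/-- The `k`-rainbow cycle index `crx_k(G)`. -/
noncomputable def SimpleGraph.crx {V : Type*} (G : SimpleGraph V) (k : ℕ) : ℕ :=
  sInf {r | ∃ φ : Sym2 V → ℕ, (∀ e ∈ G.edgeSet, φ e < r) ∧ G.IsRainbowCycleColoring k φ}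

/-- Number of edges of `G`. -/
noncomputable def SimpleGraph.numEdges {V : Type*} (G : SimpleGraph V) : ℕ :=
  Nat.card G.edgeSet

/-- A graph is 2-connected if it has more than 2 vertices and deleting any vertex
leaves it connected. -/
def SimpleGraph.IsTwoConnected {V : Type*} (G : SimpleGraph V) : Prop :=
  2 < Nat.card V ∧ ∀ v : V, (G.induce {w | w ≠ v}).Connected

/-- A graph is Hamiltonian if it has a cycle through all its vertices. -/
def SimpleGraph.IsHamiltonianGraph {V : Type*} (G : SimpleGraph V) : Prop :=
  ∃ (u : V) (c : G.Walk u u), c.IsCycle ∧ ∀ v : V, v ∈ c.support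

/-!
Colour the edges of `K_ℕ` as follows: an edge joining two multiples of 3, or two non-multiples,
gets colour 0, and an edge joining a multiple `s` of 3 to a non-multiple `t` gets colour
`t mod 3` if `s < t` and `-t mod 3` if `t < s`. The multiples of 3 act as hubs: for every pair
`u < v` a suitable hub or non-hub `w ≤ max v 2`, chosen from the residues of `u` and `v`,
closes a rainbow triangle `u v w`. Hence the colouring restricts to a 3-colouring of `K_n`,
`n ≥ 3`, in which every pair lies in a rainbow triangle. Conversely a rainbow cycle has at
least three edges, so no colouring with fewer than three colours works.
-/

namespace SimpleGraph

variable {V : Type*} {G : SimpleGraph V}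

theorem Walk.isCycle_triangle {u v w : V} (huv : G.Adj u v) (hvw : G.Adj v w)
    (hwu : G.Adj w u) : (cons huv (cons hvw (cons hwu nil))).IsCycle := by
  simp [Walk.cons_isCycle_iff, huv.ne, hvw.ne, hwu.ne, huv.ne.symm, hwu.ne.symm]

theorem Walk.IsCycle.three_le_of_nodup_map {u : V} {c : G.Walk u u} (hc : c.IsCycle)
    {φ : Sym2 V → ℕ} {r : ℕ} (hφ : ∀ e ∈ G.edgeSet, φ e < r) (hnd : (c.edges.map φ).Nodup) :
    3 ≤ r :=
  calc 3 ≤ (c.edges.map φ).length := by simpa using hc.three_le_length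
    _ ≤ (List.range r).length := (hnd.subperm fun _ hx => by
        obtain ⟨e, he, rfl⟩ := List.mem_map.1 hx
        exact List.mem_range.2 (hφ e (c.edges_subset_edgeSet he))).length_le
    _ = r := List.length_range

theorem IsRainbowCycleColoring.three_le [Fintype V] {k : ℕ} {φ : Sym2 V → ℕ} {r : ℕ}
    (hφ : ∀ e ∈ G.edgeSet, φ e < r) (h : G.IsRainbowCycleColoring k φ)
    (hk : k ≤ Fintype.card V) : 3 ≤ r := by
  obtain ⟨S, -, hS⟩ := Finset.exists_subset_card_eq (s := Finset.univ) hk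
  obtain ⟨u, c, hc, -, hnd⟩ := h S hS
  exact hc.three_le_of_nodup_map hφ hnd

theorem isRainbowCycleColoring_two_of_rainbow_triangles {φ : Sym2 V → ℕ}
    (h : ∀ u v, u ≠ v → ∃ w, G.Adj u v ∧ G.Adj v w ∧ G.Adj w u ∧
      [φ s(u, v), φ s(v, w), φ s(w, u)].Nodup) :
    G.IsRainbowCycleColoring 2 φ := by
  classical
  intro S hS
  obtain ⟨u, v, huv, rfl⟩ := Finset.card_eq_two.1 hS
  obtain ⟨w, huv, hvw, hwu, hnd⟩ := h u v huv
  exact ⟨u, _, Walk.isCycle_triangle huv hvw hwu, by simp, by simpa using hnd⟩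

theorem crx_eq_of_forall_le {k m : ℕ} {φ : Sym2 V → ℕ} (hφ : ∀ e ∈ G.edgeSet, φ e < m)
    (h : G.IsRainbowCycleColoring k φ)
    (hmin : ∀ (ψ : Sym2 V → ℕ) (r : ℕ), (∀ e ∈ G.edgeSet, ψ e < r) →
      G.IsRainbowCycleColoring k ψ → m ≤ r) :
    G.crx k = m :=
  le_antisymm (Nat.sInf_le ⟨φ, hφ, h⟩) (le_csInf ⟨m, φ, hφ, h⟩ fun _ ⟨ψ, hψ, h⟩ => hmin ψ _ hψ h)

end SimpleGraph

namespace HubColoring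

def residueColor (a b : ℕ) : ℕ :=
  if a = 0 then b else if b = 0 then 3 - a else 0

def color (u v : ℕ) : ℕ :=
  residueColor (min u v % 3) (max u v % 3)

theorem color_comm (u v : ℕ) : color u v = color v u := by
  rw [color, color, min_comm, max_comm]

theorem color_lt_three (u v : ℕ) : color u v < 3 := by
  unfold color residueColor
  split_ifs <;> omega

def apex (u v : ℕ) : ℕ :=
  if u % 3 = 0 then
    if v % 3 = 1 then (if u = 0 then 2 else u - 2) else u + 1
  else if v % 3 = 0 then u - 1
  else if u % 3 = v % 3 then v - v % 3
  else 0

theorem apex_spec {u v : ℕ} (h : u < v) :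
    apex u v ≤ max v 2 ∧ apex u v ≠ u ∧ apex u v ≠ v ∧
      [color u v, color v (apex u v), color (apex u v) u].Nodup := by
  unfold apex
  split_ifs <;> refine ⟨by omega, by omega, by omega, ?_⟩ <;>
    simp only [List.nodup_cons, List.mem_cons, List.not_mem_nil, List.nodup_nil, or_false,
      and_true, not_false_eq_true] <;>
    grind [color, residueColor]

theorem exists_rainbow_triangle {u v : ℕ} (h : u ≠ v) :
    ∃ w ≤ max (max u v) 2, w ≠ u ∧ w ≠ v ∧ [color u v, color v w, color w u].Nodup := by
  rcases h.lt_or_gt with h | h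
  · obtain ⟨hle, hu, hv, hnd⟩ := apex_spec h
    exact ⟨apex u v, by omega, hu, hv, hnd⟩
  · obtain ⟨hle, hv, hu, hnd⟩ := apex_spec h
    refine ⟨apex v u, by omega, hu, hv, ?_⟩
    rw [color_comm v u, color_comm u (apex v u), color_comm (apex v u) v] at hnd
    exact ((List.Perm.swap _ _ _).cons _).nodup_iff.1 hnd

def finColoring (n : ℕ) : Sym2 (Fin n) → ℕ :=
  Sym2.lift ⟨fun u v => color u v, fun u v => color_comm u v⟩

theorem finColoring_lt_three {n : ℕ} (e : Sym2 (Fin n)) : finColoring n e < 3 :=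
  e.ind fun u v => color_lt_three u v

theorem isRainbowCycleColoring_finColoring {n : ℕ} (hn : 3 ≤ n) :
    (completeGraph (Fin n)).IsRainbowCycleColoring 2 (finColoring n) := by
  refine SimpleGraph.isRainbowCycleColoring_two_of_rainbow_triangles fun u v huv => ?_
  obtain ⟨w, hw, hwu, hwv, hnd⟩ := exists_rainbow_triangle (Fin.val_ne_of_ne huv)
  exact ⟨⟨w, by omega⟩, huv, fun h => hwv (congrArg Fin.val h).symm,
    fun h => hwu (congrArg Fin.val h), hnd⟩

end HubColoring

/-- crx_2(K_n) = 3 for n ≥ 3. -/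
theorem crx_two_complete (n : ℕ) (hn : 3 ≤ n) :
    (completeGraph (Fin n)).crx 2 = 3 :=
  SimpleGraph.crx_eq_of_forall_le (fun e _ => HubColoring.finColoring_lt_three e)
    (HubColoring.isRainbowCycleColoring_finColoring hn)
    fun _ _ hψ h => h.three_le hψ (by rw [Fintype.card_fin]; omega)
end

section
/- crx_1(K_{m,n}) = 4 for all 2 ≤ m ≤ n. -/
open SimpleGraph

/-!
A rainbow cycle uses as many colours as it has edges, and every cycle of a bipartite graph is
even, hence of length at least 4; so at least 4 colours are needed. Conversely, folding each side
of `K_{m,n}` onto `{0, ≥ 1}` maps it onto `K_{2,2}`; colour each edge by the image edge, using four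
distinct colours. Every vertex `v` lies on a 4-cycle through one vertex of each fold class on
either side, which the folding maps bijectively onto `K_{2,2}`, so this cycle is rainbow.
-/

lemma Fin.exists_min_one_ne {m : ℕ} (hm : 2 ≤ m) (a : Fin m) :
    ∃ a' : Fin m, min a.val 1 ≠ min a'.val 1 := by
  by_cases ha : a.val = 0
  · exact ⟨⟨1, hm⟩, by simp [ha]⟩
  · exact ⟨⟨0, by omega⟩, by simpa using ha⟩

namespace SimpleGraph

variable {V : Type*} {G : SimpleGraph V}

lemma Coloring.four_le_egirth (C : G.Coloring Bool) : 4 ≤ G.egirth := by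
  refine le_egirth.mpr fun u c hc => ?_
  obtain ⟨k, hk⟩ := (C.even_length_iff_congr c).mpr Iff.rfl
  have := hc.three_le_length
  exact_mod_cast (show 4 ≤ c.length by omega)

lemma Walk.length_le_of_nodup_map_edges {φ : Sym2 V → ℕ} {r : ℕ}
    (hφ : ∀ e ∈ G.edgeSet, φ e < r) {u v : V} (c : G.Walk u v) (hc : (c.edges.map φ).Nodup) :
    c.length ≤ r := by
  have hsub : c.edges.map φ ⊆ List.range r := by
    simp only [List.subset_def, List.mem_map, List.mem_range]
    rintro _ ⟨e, he, rfl⟩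
    exact hφ e (c.edges_subset_edgeSet he)
  simpa [Walk.length_edges] using (hc.subperm hsub).length_le

lemma crx_eq_of_isRainbowCycleColoring {k r : ℕ} {φ : Sym2 V → ℕ}
    (hk : ∃ S : Finset V, S.card = k) (hr : (r : ℕ∞) ≤ G.egirth)
    (hφ : ∀ e ∈ G.edgeSet, φ e < r) (hrc : G.IsRainbowCycleColoring k φ) :
    G.crx k = r := by
  refine le_antisymm (Nat.sInf_le ⟨φ, hφ, hrc⟩) (le_csInf ⟨r, φ, hφ, hrc⟩ ?_)
  rintro r' ⟨ψ, hψ, hψrc⟩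
  obtain ⟨S, hS⟩ := hk
  obtain ⟨u, c, hc, -, hnodup⟩ := hψrc S hS
  have hlen : (c.length : ℕ∞) ≤ r' := by
    exact_mod_cast c.length_le_of_nodup_map_edges hψ hnodup
  exact_mod_cast hr.trans ((egirth_le_length hc).trans hlen)

lemma isRainbowCycleColoring_one_iff {φ : Sym2 V → ℕ} :
    G.IsRainbowCycleColoring 1 φ ↔
      ∀ v, ∃ (u : V) (c : G.Walk u u), c.IsCycle ∧ v ∈ c.support ∧ (c.edges.map φ).Nodup := by
  simp [IsRainbowCycleColoring, Finset.card_eq_one]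

lemma exists_isCycle_square {v₀ v₁ v₂ v₃ : V} (h₀₁ : G.Adj v₀ v₁) (h₁₂ : G.Adj v₁ v₂)
    (h₂₃ : G.Adj v₂ v₃) (h₃₀ : G.Adj v₃ v₀) (h₀₂ : v₀ ≠ v₂) (h₁₃ : v₁ ≠ v₃) :
    ∃ c : G.Walk v₀ v₀, c.IsCycle ∧ c.support = [v₀, v₁, v₂, v₃, v₀] ∧
      c.edges = [s(v₀, v₁), s(v₁, v₂), s(v₂, v₃), s(v₃, v₀)] := by
  refine ⟨.cons h₀₁ (.cons h₁₂ (.cons h₂₃ (.cons h₃₀ .nil))), ?_, rfl, rfl⟩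
  have := h₀₁.ne; have := h₁₂.ne; have := h₂₃.ne; have := h₃₀.ne
  simp only [Walk.cons_isCycle_iff, Walk.cons_isPath_iff, Walk.support_cons, Walk.edges_cons,
    Walk.support_nil, Walk.edges_nil, List.mem_cons, Sym2.eq_iff,
    List.not_mem_nil, Walk.IsPath.nil]
  tauto

section CompleteBipartite

variable {α β : Type*}

def bipartiteEdgeColoring (f : α → β → ℕ) : Sym2 (α ⊕ β) → ℕ :=
  Sym2.lift ⟨fun
    | .inl a, .inr b | .inr b, .inl a => f a b
    | _, _ => 0, by rintro (a | b) (a' | b') <;> rfl⟩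

@[simp]
lemma bipartiteEdgeColoring_inl_inr (f : α → β → ℕ) (a : α) (b : β) :
    bipartiteEdgeColoring f s(.inl a, .inr b) = f a b := rfl

@[simp]
lemma bipartiteEdgeColoring_inr_inl (f : α → β → ℕ) (a : α) (b : β) :
    bipartiteEdgeColoring f s(.inr b, .inl a) = f a b := rfl

lemma bipartiteEdgeColoring_lt {f : α → β → ℕ} {r : ℕ} (hf : ∀ a b, f a b < r) :
    ∀ e ∈ (completeBipartiteGraph α β).edgeSet, bipartiteEdgeColoring f e < r := by
  refine Sym2.ind fun x y hxy => ?_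
  rcases x with a | b <;> rcases y with a' | b' <;> simp_all

lemma exists_rainbow_square {f : α → β → ℕ} {a a' : α} {b b' : β}
    (hf : [f a b, f a' b, f a' b', f a b'].Nodup) :
    ∃ c : (completeBipartiteGraph α β).Walk (.inl a) (.inl a), c.IsCycle ∧
      c.support = [.inl a, .inr b, .inl a', .inr b', .inl a] ∧
      (c.edges.map (bipartiteEdgeColoring f)).Nodup := by
  have ha : a ≠ a' := by rintro rfl; simp at hf
  have hb : b ≠ b' := by rintro rfl; simp at hf
  obtain ⟨c, hc, hsupp, hedges⟩ := exists_isCycle_square (G := completeBipartiteGraph α β)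
    (v₀ := .inl a) (v₁ := .inr b) (v₂ := .inl a') (v₃ := .inr b')
    (by simp) (by simp) (by simp) (by simp) (by simpa using ha) (by simpa using hb)
  exact ⟨c, hc, hsupp, by simpa [hedges] using hf⟩

end CompleteBipartite

section Folded

variable {m n : ℕ}

def foldedColor (a : Fin m) (b : Fin n) : ℕ := 2 * min a.val 1 + min b.val 1

lemma foldedColor_lt_four (a : Fin m) (b : Fin n) : foldedColor a b < 4 := by
  unfold foldedColor
  omega

lemma foldedColor_square_nodup {a a' : Fin m} {b b' : Fin n} (ha : min a.val 1 ≠ min a'.val 1)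
    (hb : min b.val 1 ≠ min b'.val 1) :
    [foldedColor a b, foldedColor a' b, foldedColor a' b', foldedColor a b'].Nodup := by
  simp only [foldedColor, List.nodup_cons, List.mem_cons, List.not_mem_nil, List.nodup_nil,
    or_false, not_false_eq_true, and_true]
  omega

lemma isRainbowCycleColoring_foldedColor (hm : 2 ≤ m) (hn : 2 ≤ n) :
    (completeBipartiteGraph (Fin m) (Fin n)).IsRainbowCycleColoring 1
      (bipartiteEdgeColoring foldedColor) := by
  rw [isRainbowCycleColoring_one_iff]
  rintro (a | b)
  · obtain ⟨a', ha'⟩ := Fin.exists_min_one_ne hm a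
    obtain ⟨c, hc, hsupp, hrainbow⟩ := exists_rainbow_square
      (foldedColor_square_nodup (b := ⟨0, by omega⟩) (b' := ⟨1, hn⟩) ha' (by simp))
    exact ⟨_, c, hc, by simp [hsupp], hrainbow⟩
  · obtain ⟨b', hb'⟩ := Fin.exists_min_one_ne hn b
    obtain ⟨c, hc, hsupp, hrainbow⟩ := exists_rainbow_square
      (foldedColor_square_nodup (a := ⟨0, by omega⟩) (a' := ⟨1, hm⟩) (by simp) hb')
    exact ⟨_, c, hc, by simp [hsupp], hrainbow⟩

end Folded

end SimpleGraph

/-- crx_1(K_{m,n}) = 4 for 2 ≤ m ≤ n. -/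
theorem crx_one_completeBipartite (m n : ℕ) (hm : 2 ≤ m) (hmn : m ≤ n) :
    (completeBipartiteGraph (Fin m) (Fin n)).crx 1 = 4 :=
  crx_eq_of_isRainbowCycleColoring ⟨{.inl ⟨0, by omega⟩}, rfl⟩
    (CompleteBipartiteGraph.bicoloring _ _).four_le_egirth
    (bipartiteEdgeColoring_lt foldedColor_lt_four)
    (isRainbowCycleColoring_foldedColor hm (hm.trans hmn))
end

section
/- crx_2(K_{2,n}) = 2n for every n ≥ 2; equivalently, the only 2-rainbow cycle colouring of K_{2,n} is the rainbow colouring of all its edges. -/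
open SimpleGraph

/-! In `K_{2,n}` every vertex `b` of the large side has degree two, so a cycle through `b` uses
both edges at `b`. Two edges at `b` and `b'` therefore lie on every cycle through `{b, b'}` (through
`{b, b''}` for some `b'' ≠ b` if `b = b'`), and a 2-rainbow cycle colouring must give them distinct
colours: at least `2n` colours are needed. Conversely any two vertices lie on a common 4-cycle, so
colouring the `2n` edges pairwise differently is a 2-rainbow cycle colouring. -/

theorem exists_ne_and_eq_or_eq {β : Type*} [Nontrivial β] (b b' : β) :
    ∃ b'', b ≠ b'' ∧ (b' = b ∨ b' = b'') := by
  obtain rfl | h := eq_or_ne b' b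
  · obtain ⟨b'', hb''⟩ := exists_ne b'
    exact ⟨b'', hb''.symm, .inl rfl⟩
  · exact ⟨b', h.symm, .inr rfl⟩

namespace SimpleGraph

section General

variable {V : Type*} {G : SimpleGraph V}

/-- A cycle has exactly two edges at each of its vertices. -/
theorem Walk.IsCycle.mem_edges_of_neighborSet_subset_pair {u v w x y : V} {c : G.Walk u u}
    (hc : c.IsCycle) (hv : v ∈ c.support) (hN : G.neighborSet v ⊆ {x, y}) (hvw : G.Adj v w) :
    s(v, w) ∈ c.edges := by
  have hcN : c.toSubgraph.neighborSet v = {x, y} :=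
    Set.eq_of_subset_of_ncard_le ((c.toSubgraph.neighborSet_subset v).trans hN)
      (by rw [hc.ncard_neighborSet_toSubgraph_eq_two hv]
          exact (Set.ncard_insert_le _ _).trans (by simp))
  have hw : w ∈ c.toSubgraph.neighborSet v := hcN ▸ hN hvw
  exact Walk.adj_toSubgraph_iff_mem_edges.mp hw

theorem isRainbowCycleColoring_of_injOn {k : ℕ} {φ : Sym2 V → ℕ}
    (hcyc : ∀ S : Finset V, S.card = k → G.CycleThrough S) (hφ : Set.InjOn φ G.edgeSet) :
    G.IsRainbowCycleColoring k φ := by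
  intro S hS
  obtain ⟨u, c, hc, hS⟩ := hcyc S hS
  exact ⟨u, c, hc, hS, hc.isTrail.edges_nodup.map_on fun e he e' he' ↦
    hφ (c.edges_subset_edgeSet he) (c.edges_subset_edgeSet he')⟩

theorem IsRainbowCycleColoring.injOn_edgeSet {k : ℕ} {φ : Sym2 V → ℕ}
    (hφ : G.IsRainbowCycleColoring k φ)
    (hforced : ∀ e ∈ G.edgeSet, ∀ e' ∈ G.edgeSet, ∃ S : Finset V, S.card = k ∧
      ∀ (u : V) (c : G.Walk u u), c.IsCycle → (∀ v ∈ S, v ∈ c.support) →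
        e ∈ c.edges ∧ e' ∈ c.edges) :
    Set.InjOn φ G.edgeSet := by
  intro e he e' he' hφe
  obtain ⟨S, hS, hSc⟩ := hforced e he e' he'
  obtain ⟨u, c, hc, hcS, hnodup⟩ := hφ S hS
  obtain ⟨hec, he'c⟩ := hSc u c hc hcS
  exact List.inj_on_of_nodup_map hnodup hec he'c hφe

theorem exists_injOn_edgeSet_lt_numEdges [Finite G.edgeSet] :
    ∃ φ : Sym2 V → ℕ, (∀ e ∈ G.edgeSet, φ e < G.numEdges) ∧ Set.InjOn φ G.edgeSet := by
  classical
  let idx := Finite.equivFin G.edgeSet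
  refine ⟨fun e ↦ if he : e ∈ G.edgeSet then idx ⟨e, he⟩ else 0, fun e he ↦ ?_, ?_⟩
  · simp only [he, dite_true]
    exact (idx ⟨e, he⟩).isLt
  · intro e he e' he' h
    simp only [he, he', dite_true, Fin.val_inj, idx.apply_eq_iff_eq, Subtype.mk.injEq] at h
    exact h

theorem numEdges_le_of_injOn {φ : Sym2 V → ℕ} {r : ℕ} (hlt : ∀ e ∈ G.edgeSet, φ e < r)
    (hφ : Set.InjOn φ G.edgeSet) : G.numEdges ≤ r := by
  have hinj : Function.Injective fun e : G.edgeSet ↦ (⟨φ e, hlt e e.2⟩ : Fin r) :=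
    fun e e' h ↦ Subtype.ext (hφ e.2 e'.2 (congrArg Fin.val h))
  exact (Nat.card_le_card_of_injective _ hinj).trans_eq (Nat.card_fin r)

theorem crx_eq_numEdges [Finite G.edgeSet] {k : ℕ}
    (hcyc : ∀ S : Finset V, S.card = k → G.CycleThrough S)
    (hinj : ∀ φ, G.IsRainbowCycleColoring k φ → Set.InjOn φ G.edgeSet) :
    G.crx k = G.numEdges := by
  obtain ⟨φ, hφlt, hφinj⟩ := G.exists_injOn_edgeSet_lt_numEdges
  have hmem : G.numEdges ∈ {r | ∃ φ : Sym2 V → ℕ, (∀ e ∈ G.edgeSet, φ e < r) ∧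
      G.IsRainbowCycleColoring k φ} :=
    ⟨φ, hφlt, isRainbowCycleColoring_of_injOn hcyc hφinj⟩
  refine le_antisymm (Nat.sInf_le hmem) ?_
  obtain ⟨ψ, hψlt, hψ⟩ := Nat.sInf_mem ⟨_, hmem⟩
  exact numEdges_le_of_injOn hψlt (hinj ψ hψ)

end General

section CompleteBipartite

variable {α β : Type*}

theorem numEdges_completeBipartiteGraph [Finite α] [Finite β] :
    (completeBipartiteGraph α β).numEdges = Nat.card α * Nat.card β := by
  rw [numEdges, Nat.card_coe_set_eq, Set.ncard_def, encard_edgeSet_completeBipartiteGraph,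
    ENat.card_eq_coe_natCard, ENat.card_eq_coe_natCard]
  rfl

theorem cycleThrough_completeBipartiteGraph {a a' : α} {b b' : β} (ha : a ≠ a') (hb : b ≠ b') :
    (completeBipartiteGraph α β).CycleThrough {.inl a, .inl a', .inr b, .inr b'} := by
  have h₁ : (completeBipartiteGraph α β).Adj (.inl a) (.inr b) := by simp
  have h₂ : (completeBipartiteGraph α β).Adj (.inr b) (.inl a') := by simp
  have h₃ : (completeBipartiteGraph α β).Adj (.inl a') (.inr b') := by simp
  have h₄ : (completeBipartiteGraph α β).Adj (.inr b') (.inl a) := by simp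
  refine ⟨_, .cons h₁ (.cons h₂ (.cons h₃ (.cons h₄ .nil))), ?_, by simp⟩
  rw [Walk.cons_isCycle_iff, Walk.isPath_def]
  simp [ha, hb, ha.symm]

theorem cycleThrough_completeBipartiteGraph_fin_two_of_card_eq_two [Nontrivial β]
    (S : Finset (Fin 2 ⊕ β)) (hS : S.card = 2) :
    (completeBipartiteGraph (Fin 2) β).CycleThrough S := by
  suffices hcover : ∃ b b' : β, b ≠ b' ∧
      (S : Set (Fin 2 ⊕ β)) ⊆ {.inl 0, .inl 1, .inr b, .inr b'} by
    obtain ⟨b, b', hb, hS⟩ := hcover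
    obtain ⟨u, c, hc, hsupp⟩ := cycleThrough_completeBipartiteGraph Fin.zero_ne_one hb
    exact ⟨u, c, hc, fun v hv ↦ hsupp v (hS hv)⟩
  classical
  obtain ⟨x, y, -, rfl⟩ := Finset.card_eq_two.mp hS
  have hleft (a : Fin 2) (b b' : β) :
      (.inl a : Fin 2 ⊕ β) ∈ ({.inl 0, .inl 1, .inr b, .inr b'} : Set _) := by
    fin_cases a <;> simp
  rcases x with a | b <;> rcases y with a' | b'
  · obtain ⟨b, b', hb⟩ := exists_pair_ne β
    exact ⟨b, b', hb, by simp [Set.insert_subset_iff, hleft]⟩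
  · obtain ⟨b, hb, -⟩ := exists_ne_and_eq_or_eq b' b'
    exact ⟨b', b, hb, by simp [Set.insert_subset_iff, hleft]⟩
  · obtain ⟨b', hb, -⟩ := exists_ne_and_eq_or_eq b b
    exact ⟨b, b', hb, by simp [Set.insert_subset_iff, hleft]⟩
  · obtain ⟨b'', hb, hb'⟩ := exists_ne_and_eq_or_eq b b'
    refine ⟨b, b'', hb, ?_⟩
    rcases hb' with rfl | rfl <;> simp [Set.insert_subset_iff]

theorem Walk.IsCycle.inl_inr_mem_edges {u : Fin 2 ⊕ β}
    {c : (completeBipartiteGraph (Fin 2) β).Walk u u} (hc : c.IsCycle) {b : β}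
    (hb : .inr b ∈ c.support) (a : Fin 2) : s(.inl a, .inr b) ∈ c.edges := by
  have hN : (completeBipartiteGraph (Fin 2) β).neighborSet (.inr b) ⊆ {.inl 0, .inl 1} := by
    rintro (a' | b') hadj
    · fin_cases a' <;> simp
    · simp at hadj
  rw [Sym2.eq_swap]
  exact hc.mem_edges_of_neighborSet_subset_pair hb hN (by simp)

theorem completeBipartiteGraph_fin_two_edge_pairs_forced [Nontrivial β] :
    ∀ e ∈ (completeBipartiteGraph (Fin 2) β).edgeSet,
    ∀ e' ∈ (completeBipartiteGraph (Fin 2) β).edgeSet,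
      ∃ S : Finset (Fin 2 ⊕ β), S.card = 2 ∧
        ∀ (u : Fin 2 ⊕ β) (c : (completeBipartiteGraph (Fin 2) β).Walk u u), c.IsCycle →
          (∀ v ∈ S, v ∈ c.support) → e ∈ c.edges ∧ e' ∈ c.edges := by
  classical
  simp only [edgeSet_completeBipartiteGraph, Set.forall_mem_range, Prod.forall]
  intro a b a' b'
  obtain ⟨b'', hb, hb'⟩ := exists_ne_and_eq_or_eq b b'
  refine ⟨{Sum.inr b, Sum.inr b''}, Finset.card_pair (by simpa using hb),
    fun u c hc hS ↦ ⟨?_, ?_⟩⟩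
  · exact hc.inl_inr_mem_edges (hS _ (by simp)) a
  · exact hc.inl_inr_mem_edges (hS _ (by rcases hb' with rfl | rfl <;> simp)) a'

end CompleteBipartite

end SimpleGraph

/-- crx_2(K_{2,n}) = 2n for n ≥ 2. -/
theorem crx_two_completeBipartite_two (n : ℕ) (hn : 2 ≤ n) :
    (completeBipartiteGraph (Fin 2) (Fin n)).crx 2 = 2 * n := by
  have : Nontrivial (Fin n) := Fin.nontrivial_iff_two_le.mpr hn
  rw [crx_eq_numEdges cycleThrough_completeBipartiteGraph_fin_two_of_card_eq_two
      fun φ hφ ↦ hφ.injOn_edgeSet completeBipartiteGraph_fin_two_edge_pairs_forced,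
    numEdges_completeBipartiteGraph, Nat.card_fin, Nat.card_fin]
end

section
/- For k ≥ 2, m ≥ 2k and n > (k−1)(4k−1)^m, we have crx_k(K_{m,n}) ≥ 4k; that is, in any edge-colouring of K_{m,n} with at most 4k−1 colours there exist k vertices with no common rainbow cycle. -/
open SimpleGraph

/-
If at most `4k - 1` colours are used, the `m` colours seen from a vertex of `V` give fewer than
`(4k - 1)^m` colour patterns, so pigeonhole yields `k` vertices `v` of `V` with the same pattern.
In a rainbow cycle through them the two cycle neighbours of each `v` lie in `U`, and no `u ∈ U`
is a cycle neighbour of two of them, since the two edges would share a colour. So the cycle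
passes through `2k` vertices of `U`; as `U` is independent, each contributes two cycle edges of
its own, and the cycle has at least `4k` edges, hence needs at least `4k` colours.

As `crx` is an infimum, some rainbow colouring must also exist: an injective one works, since
any `k` vertices lie on a zigzag cycle of length `2k` once both sides have `k` vertices.
-/

open Finset Function Sum

lemma Finset.two_mul_card_le_card_biUnion {ι M : Type*} [DecidableEq M] {s : Finset ι}
    {t : ι → Finset M} (hdisj : (s : Set ι).PairwiseDisjoint t) (h2 : ∀ i ∈ s, 2 ≤ #(t i)) :
    2 * #s ≤ #(s.biUnion t) :=
  calc 2 * #s = ∑ _i ∈ s, 2 := by rw [sum_const, smul_eq_mul, mul_comm]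
    _ ≤ ∑ i ∈ s, #(t i) := sum_le_sum h2
    _ = #(s.biUnion t) := (card_biUnion hdisj).symm

lemma Finset.exists_injective_fin_subset_range {α : Type*} [Fintype α] (A : Finset α) {t : ℕ}
    (hA : #A ≤ t) (ht : t ≤ Fintype.card α) :
    ∃ a : Fin t → α, Injective a ∧ (A : Set α) ⊆ Set.range a := by
  obtain ⟨B, hAB, hB⟩ := exists_superset_card_eq hA ht
  refine ⟨(↑) ∘ (B.equivFinOfCardEq hB).symm, Subtype.val_injective.comp (Equiv.injective _),
    fun x hx => ⟨B.equivFinOfCardEq hB ⟨x, hAB hx⟩, by simp⟩⟩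

namespace SimpleGraph

variable {V : Type*} {G : SimpleGraph V}

lemma cycleGraph.mem_support_cycle (N : ℕ) (i : Fin (N + 3)) :
    i ∈ (cycleGraph.cycle N).support := by
  have hi : (cycleGraph.cycle N).getVert (N + 3 - i) = i := by
    rw [cycleGraph.getVert_cycle (by omega)]
    ext
    simp only
    rw [Nat.sub_sub_self (by omega), Nat.mod_eq_of_lt i.isLt]
  exact hi ▸ Walk.getVert_mem_support _ _

lemma cycleGraph.mod_two_ne_of_adj {t : ℕ} {i j : Fin (2 * t)}
    (h : (cycleGraph (2 * t)).Adj i j) : (i : ℕ) % 2 ≠ j % 2 := by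
  have key : ∀ a b : Fin (2 * t), ((a - b : Fin (2 * t)) : ℕ) = 1 → (a : ℕ) % 2 ≠ b % 2 := by
    intro a b hab
    rcases le_or_gt b a with hba | hab'
    · rw [Fin.coe_sub_iff_le.2 hba] at hab
      omega
    · rw [Fin.coe_sub_iff_lt.2 hab'] at hab
      omega
  rcases cycleGraph_adj'.1 h with h | h
  · exact key i j h
  · exact (key j i h).symm

lemma exists_isCycle_forall_mem_support_of_injective {N : ℕ} (hN : 3 ≤ N)
    (f : cycleGraph N →g G) (hf : Injective f) :
    ∃ (x : V) (c : G.Walk x x), c.IsCycle ∧ ∀ i, f i ∈ c.support := by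
  obtain ⟨N, rfl⟩ : ∃ N', N = N' + 3 := ⟨N - 3, by omega⟩
  refine ⟨f 0, (cycleGraph.cycle N).map f,
    (Walk.isCycle_map_iff_of_injective hf).2 cycleGraph.isCycle_cycle, fun i => ?_⟩
  rw [Walk.support_map]
  exact List.mem_map_of_mem (cycleGraph.mem_support_cycle N i)

lemma isRainbowCycleColoring_of_injective {k : ℕ} {φ : Sym2 V → ℕ} (hφ : Injective φ)
    (h : ∀ S : Finset V, #S = k → G.CycleThrough S) : G.IsRainbowCycleColoring k φ := by
  intro S hS
  obtain ⟨x, c, hc, hSc⟩ := h S hS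
  exact ⟨x, c, hc, hSc, hc.isCircuit.isTrail.edges_nodup.map hφ⟩

namespace Walk

variable {x : V} {c : G.Walk x x}

lemma length_le_of_nodup_map {φ : Sym2 V → ℕ} {r : ℕ} (hφ : ∀ e ∈ c.edges, φ e < r)
    (hc : (c.edges.map φ).Nodup) : c.length ≤ r := by
  have hsub : (c.edges.map φ).toFinset ⊆ range r := by
    intro a ha
    obtain ⟨e, he, rfl⟩ := List.mem_map.1 (List.mem_toFinset.1 ha)
    exact mem_range.2 (hφ e he)
  simpa [List.toFinset_card_of_nodup hc] using card_le_card hsub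

lemma IsCycle.exists_ne_mem_edges (hc : c.IsCycle) {v : V} (hv : v ∈ c.support) :
    ∃ w₁ w₂, w₁ ≠ w₂ ∧ s(v, w₁) ∈ c.edges ∧ s(v, w₂) ∈ c.edges := by
  obtain ⟨w₁, w₂, hne, hw⟩ := Set.ncard_eq_two.1 (hc.ncard_neighborSet_toSubgraph_eq_two hv)
  have hmem : ∀ w ∈ c.toSubgraph.neighborSet v, s(v, w) ∈ c.edges :=
    fun w hw => adj_toSubgraph_iff_mem_edges.1 hw
  exact ⟨w₁, w₂, hne, hmem w₁ (by simp [hw]), hmem w₂ (by simp [hw])⟩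

/-- The cycle edges at distinct vertices of an independent set are distinct. -/
lemma IsCycle.two_mul_card_le_length [DecidableEq V] (hc : c.IsCycle) {X : Finset V}
    (hX : ∀ v ∈ X, v ∈ c.support) (hXind : G.IsIndepSet X) : 2 * #X ≤ c.length := by
  let E : V → Finset (Sym2 V) := fun v => c.edges.toFinset.filter (v ∈ ·)
  have hE2 : ∀ v ∈ X, 2 ≤ #(E v) := by
    intro v hv
    obtain ⟨w₁, w₂, hne, h₁, h₂⟩ := hc.exists_ne_mem_edges (hX v hv)
    exact one_lt_card.2
      ⟨s(v, w₁), by simp [E, h₁], s(v, w₂), by simp [E, h₂], mt Sym2.congr_right.1 hne⟩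
  have hEdisj : (X : Set V).PairwiseDisjoint E := by
    intro v hv w hw hvw
    refine Finset.disjoint_left.2 fun e (hev : e ∈ E v) (hew : e ∈ E w) => ?_
    simp only [E, mem_filter, List.mem_toFinset] at hev hew
    rw [(Sym2.mem_and_mem_iff hvw).1 ⟨hev.2, hew.2⟩] at hev
    exact hXind hv hw hvw (c.adj_of_mem_edges hev.1)
  calc 2 * #X ≤ #(X.biUnion E) := Finset.two_mul_card_le_card_biUnion hEdisj hE2
    _ ≤ #c.edges.toFinset := card_le_card (biUnion_subset.2 fun _ _ => filter_subset _ _)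
    _ = c.length := by
      rw [List.toFinset_card_of_nodup hc.isCircuit.isTrail.edges_nodup, length_edges]

end Walk

namespace completeBipartiteGraph

variable {α β : Type*}

def zigzag {t : ℕ} (a : Fin t → α) (b : Fin t → β) :
    cycleGraph (2 * t) →g completeBipartiteGraph α β where
  toFun i := if (i : ℕ) % 2 = 0 then inl (a ⟨i / 2, by omega⟩) else inr (b ⟨i / 2, by omega⟩)
  map_rel' {i j} h := by
    have := cycleGraph.mod_two_ne_of_adj h
    split_ifs <;> simp_all

lemma zigzag_injective {t : ℕ} {a : Fin t → α} {b : Fin t → β} (ha : Injective a)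
    (hb : Injective b) : Injective (zigzag a b) := by
  intro i j h
  simp only [zigzag, RelHom.coeFn_mk] at h
  split_ifs at h with hi hj hj <;> simp only [inl.injEq, inr.injEq] at h
  · have := Fin.mk.inj_iff.1 (ha h)
    ext; omega
  · have := Fin.mk.inj_iff.1 (hb h)
    ext; omega

lemma exists_isCycle_of_injective {t : ℕ} (ht : 2 ≤ t) {a : Fin t → α} {b : Fin t → β}
    (ha : Injective a) (hb : Injective b) :
    ∃ (x : α ⊕ β) (c : (completeBipartiteGraph α β).Walk x x), c.IsCycle ∧
      (∀ i, inl (a i) ∈ c.support) ∧ ∀ i, inr (b i) ∈ c.support := by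
  obtain ⟨x, c, hc, hsupp⟩ :=
    exists_isCycle_forall_mem_support_of_injective (by omega) _ (zigzag_injective ha hb)
  refine ⟨x, c, hc, fun i => ?_, fun i => ?_⟩
  · simpa [zigzag] using hsupp ⟨2 * i, by omega⟩
  · simpa [zigzag, Nat.mul_add_div] using hsupp ⟨2 * i + 1, by omega⟩

lemma cycleThrough_of_card_le [Fintype α] [Fintype β] {S : Finset (α ⊕ β)} {t : ℕ} (ht : 2 ≤ t)
    (hS : #S ≤ t) (hα : t ≤ Fintype.card α) (hβ : t ≤ Fintype.card β) :
    (completeBipartiteGraph α β).CycleThrough S := by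
  obtain ⟨a, ha, hA⟩ := S.toLeft.exists_injective_fin_subset_range (card_toLeft_le.trans hS) hα
  obtain ⟨b, hb, hB⟩ := S.toRight.exists_injective_fin_subset_range (card_toRight_le.trans hS) hβ
  obtain ⟨x, c, hc, hca, hcb⟩ := exists_isCycle_of_injective ht ha hb
  refine ⟨x, c, hc, ?_⟩
  rintro (u | v) hS
  · obtain ⟨i, rfl⟩ := hA (mem_toLeft.2 hS)
    exact hca i
  · obtain ⟨i, rfl⟩ := hB (mem_toRight.2 hS)
    exact hcb i

lemma exists_card_eq_colour_pattern_eq [Fintype α] [Fintype β] (φ : Sym2 (α ⊕ β) → ℕ)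
    {r j : ℕ} (hφ : ∀ e ∈ (completeBipartiteGraph α β).edgeSet, φ e < r)
    (h : j * r ^ Fintype.card α < Fintype.card β) :
    ∃ S : Finset β, #S = j + 1 ∧
      ∀ v ∈ S, ∀ v' ∈ S, ∀ u, φ s(inl u, inr v) = φ s(inl u, inr v') := by
  classical
  let pattern : β → α → Fin r := fun v u => ⟨φ s(inl u, inr v), hφ _ (by simp)⟩
  obtain ⟨p, hp⟩ := Fintype.exists_lt_card_fiber_of_mul_lt_card pattern (n := j)
    (by simpa [mul_comm] using h)
  obtain ⟨S, hSp, hS⟩ := exists_subset_card_eq hp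
  refine ⟨S, hS, fun v hv v' hv' u => ?_⟩
  have hvv' : pattern v = pattern v' :=
    (mem_filter.1 (hSp hv)).2.trans (mem_filter.1 (hSp hv')).2.symm
  exact Fin.val_eq_of_eq (congrFun hvv' u)

/-- Vertices of `β` with equal colour patterns are at distance at least `4` on a rainbow cycle. -/
lemma four_mul_card_le_length_of_rainbow [Fintype α] [DecidableEq α] [DecidableEq β]
    {φ : Sym2 (α ⊕ β) → ℕ} {x : α ⊕ β} {c : (completeBipartiteGraph α β).Walk x x}
    (hc : c.IsCycle) (hrainbow : (c.edges.map φ).Nodup) {S : Finset β}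
    (hS : ∀ v ∈ S, inr v ∈ c.support)
    (hpattern : ∀ v ∈ S, ∀ v' ∈ S, ∀ u, φ s(inl u, inr v) = φ s(inl u, inr v')) :
    4 * #S ≤ c.length := by
  let N : β → Finset α := fun v => {u | s(inl u, inr v) ∈ c.edges}
  have hN2 : ∀ v ∈ S, 2 ≤ #(N v) := by
    intro v hv
    obtain ⟨w₁, w₂, hne, h₁, h₂⟩ := hc.exists_ne_mem_edges (hS v hv)
    have hinl : ∀ w, s(inr v, w) ∈ c.edges → ∃ u, w = inl u ∧ u ∈ N v := by
      rintro (u | v') hw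
      · exact ⟨u, rfl, by simpa [N, Sym2.eq_swap] using hw⟩
      · simpa using c.adj_of_mem_edges hw
    obtain ⟨u₁, rfl, hu₁⟩ := hinl w₁ h₁
    obtain ⟨u₂, rfl, hu₂⟩ := hinl w₂ h₂
    exact one_lt_card.2 ⟨u₁, hu₁, u₂, hu₂, fun h => hne (h ▸ rfl)⟩
  have hNdisj : (S : Set β).PairwiseDisjoint N := by
    intro v hv v' hv' hvv'
    refine Finset.disjoint_left.2 fun u (hu : u ∈ N v) (hu' : u ∈ N v') => hvv' ?_
    simp only [N, mem_filter, mem_univ, true_and] at hu hu'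
    simpa using List.inj_on_of_nodup_map hrainbow hu hu' (hpattern v hv v' hv' u)
  have hT : (completeBipartiteGraph α β).IsIndepSet ↑((S.biUnion N).map (.inl : α ↪ α ⊕ β)) := by
    rintro _ hu _ hu' -
    simp only [coe_map, Set.mem_image, mem_coe] at hu hu'
    obtain ⟨u, -, rfl⟩ := hu
    obtain ⟨u', -, rfl⟩ := hu'
    simp
  have hTc : ∀ y ∈ (S.biUnion N).map (.inl : α ↪ α ⊕ β), y ∈ c.support := by
    simp only [mem_map, mem_biUnion, Embedding.inl_apply, forall_exists_index, and_imp]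
    rintro _ u v - hu rfl
    exact c.fst_mem_support_of_mem_edges (mem_filter.1 hu).2
  have := hc.two_mul_card_le_length hTc hT
  rw [card_map] at this
  linarith [Finset.two_mul_card_le_card_biUnion hNdisj hN2]

end completeBipartiteGraph

end SimpleGraph

/-- for k ≥ 2, m ≥ 2k and n > (k−1)(4k−1)^m, crx_k(K_{m,n}) ≥ 4k. -/
theorem crx_k_completeBipartite_lower (k m n : ℕ) (hk : 2 ≤ k) (hm : 2 * k ≤ m)
    (hn : (k - 1) * (4 * k - 1) ^ m < n) :
    4 * k ≤ (completeBipartiteGraph (Fin m) (Fin n)).crx k := by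
  have hkn : k ≤ n := by
    have := Nat.le_mul_of_pos_right (k - 1) (Nat.pow_pos (n := m) (by omega : 0 < 4 * k - 1))
    omega
  apply le_csInf
  · refine ⟨Fintype.card (Sym2 (Fin m ⊕ Fin n)), fun e => Fintype.equivFin _ e,
      fun e _ => Fin.is_lt _, ?_⟩
    exact isRainbowCycleColoring_of_injective (Fin.val_injective.comp (Equiv.injective _))
      fun S hS => completeBipartiteGraph.cycleThrough_of_card_le hk hS.le (by simp; omega)
        (by simpa)
  · rintro r ⟨φ, hφ, hrainbow⟩
    by_contra! hr
    obtain ⟨S, hScard, hpattern⟩ :=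
      completeBipartiteGraph.exists_card_eq_colour_pattern_eq φ hφ (j := k - 1) (by
        simpa using (Nat.mul_le_mul_left _ (Nat.pow_le_pow_left (by omega) m)).trans_lt hn)
    obtain ⟨x, c, hc, hSc, hcφ⟩ := hrainbow (S.map .inr) (by simp [hScard]; omega)
    have hlong := completeBipartiteGraph.four_mul_card_le_length_of_rainbow hc hcφ
      (fun v hv => hSc _ (by simpa)) hpattern
    have hshort := Walk.length_le_of_nodup_map (fun e he => hφ e (c.edges_subset_edgeSet he)) hcφ
    omega
end
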